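/- arXiv:math/0403066 — 2 statements merged into one kernel-verified Lean document; each statement's English description precedes it below -/
import Mathlib

section
/- Let Φ : L[X^∨] → H, e^τ ↦ Y_τ := H_{t_λ} H_{t_μ}^{−1} (where τ = λ − μ with λ, μ dominant), be the Bernstein homomorphism. Then the image Φ(L[X^∨]^{W_f}) of the W_f-invariant group algebra lies in the center of the extended affine Hecke algebra H. -/
/- The image under the Bernstein homomorphism `Φ : L[X^∨] → H` of the `W_f`-invariants
`L[X^∨]^{W_f}` lies in the center of the extended affine Hecke algebra `H`.
The Bernstein–Lusztig commutation relations are stated in divisibility form: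
`(1 - e^{-2α^∨}) η = ξ - sξ` replaces `η = (ξ - sξ)/(1 - e^{-2α^∨})`. -/

/-- the action of the simple reflection `s_α` on the group algebra `L[X^∨]`,
`e^τ ↦ e^{s_α(τ)}` with `s_α(τ) = τ - α(τ) α^∨`. -/
noncomputable def reflAct {L : Type*} [CommRing L] {Xv : Type*} [AddCommGroup Xv]
    (α : Xv →+ ℤ) (c : Xv) (ξ : AddMonoidAlgebra L Xv) : AddMonoidAlgebra L Xv :=
  AddMonoidAlgebra.mapDomain (fun τ => τ - α τ • c) ξ

/-! Since `H` is generated by the `Y_τ` and the `H_s`, it suffices that `Φ ξ` commutes with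
these. It commutes with the `Y_τ` because `L[X^∨]` is commutative, and with each `H_s` because
for an `s`-invariant `ξ` the Bernstein–Lusztig relation holds with `η = 0`. -/

theorem Subalgebra.mem_center_of_adjoin_eq_top {R A : Type*} [CommSemiring R] [Semiring A]
    [Algebra R A] {s : Set A} (hs : Algebra.adjoin R s = ⊤) {a : A}
    (h : ∀ b ∈ s, Commute a b) : a ∈ Subalgebra.center R A :=
  Subalgebra.mem_center_iff.mpr fun _ =>
    (Algebra.commute_of_mem_adjoin_of_forall_mem_commute (hs ▸ Algebra.mem_top) h).eq.symm

theorem commute_of_reflAct_eq_self {L : Type*} [CommRing L] {Xv : Type*} [AddCommGroup Xv]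
    {H : Type*} [Ring H] [Algebra L H] (α : Xv →+ ℤ) (c : Xv) (v v0 : L) (Hα : H)
    (Φ : AddMonoidAlgebra L Xv →ₐ[L] H)
    (hBL : ∀ ξ η : AddMonoidAlgebra L Xv,
      (1 - AddMonoidAlgebra.single (-(2 • c)) (1 : L)) * η = ξ - reflAct α c ξ →
      Hα * Φ ξ - Φ (reflAct α c ξ) * Hα
        = algebraMap L H v * Φ η + algebraMap L H v0 * Φ (AddMonoidAlgebra.single (-c) 1 * η))
    {ξ : AddMonoidAlgebra L Xv} (hξ : reflAct α c ξ = ξ) :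
    Commute (Φ ξ) Hα := by
  have h := hBL ξ 0 (by rw [hξ, mul_zero, sub_self])
  rw [hξ, mul_zero, map_zero, mul_zero, mul_zero, add_zero, sub_eq_zero] at h
  exact h.symm

theorem Bernstein_invariants_central
    {L : Type*} [CommRing L] {Xv : Type*} [AddCommGroup Xv]
    {H : Type*} [Ring H] [Algebra L H]
    -- simple roots and coroots
    (Sf : Finset (Xv →+ ℤ)) (coroot : (Xv →+ ℤ) → Xv)
    -- parameters `v^s`, `v_0^s` and the generators `H_s` for the simple reflections
    (v v0 : (Xv →+ ℤ) → Lˣ) (Hs : (Xv →+ ℤ) → H)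
    -- the Bernstein homomorphism
    (Φ : AddMonoidAlgebra L Xv →ₐ[L] H)
    -- `H` is generated as an `L`-algebra by the `Y_τ = Φ(e^τ)` and the `H_s`
    (hgen : Algebra.adjoin L
        (Set.range (fun τ : Xv => Φ (AddMonoidAlgebra.single τ 1)) ∪ (Hs '' Sf)) = ⊤)
    -- Bernstein–Lusztig relations
    (hBL : ∀ α ∈ Sf, ∀ ξ η : AddMonoidAlgebra L Xv,
      (1 - AddMonoidAlgebra.single (-(2 • coroot α)) (1 : L)) * η
          = ξ - reflAct α (coroot α) ξ →
      Hs α * Φ ξ - Φ (reflAct α (coroot α) ξ) * Hs α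
        = algebraMap L H (↑(v α)⁻¹ - ↑(v α)) * Φ η
          + algebraMap L H (↑(v0 α)⁻¹ - ↑(v0 α))
            * Φ (AddMonoidAlgebra.single (-(coroot α)) (1 : L) * η))
    -- a `W_f`-invariant element (invariance under all simple reflections)
    (ξ : AddMonoidAlgebra L Xv)
    (hinv : ∀ α ∈ Sf, reflAct α (coroot α) ξ = ξ) :
    Φ ξ ∈ Subalgebra.center L H := by
  refine Subalgebra.mem_center_of_adjoin_eq_top hgen ?_
  rintro _ (⟨τ, rfl⟩ | ⟨α, hα, rfl⟩)
  · exact (Commute.all ξ _).map Φ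
  · exact commute_of_reflAct_eq_self α (coroot α) _ _ (Hs α) Φ (hBL α hα) (hinv α hα)
end

section
/- For w ∈ W_f define Φ_w : L[X^∨] → H by e^τ ↦ Y_τ^{(w)} := H_{t_λ} H_{t_μ}^{−1} where λ, μ ∈ w(X^∨_+) and τ = λ − μ. Then Φ_w(ξ) = H_w Φ(w^{−1} ξ) H_w^{−1} for all ξ ∈ L[X^∨]. -/
/-!
Both sides of the identity are `L`-algebra maps out of `L[X^∨]`, the right-hand one being `Φ`
twisted by `w⁻¹` on the source and by conjugation with the unit `H_w` on the target. Since every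
coweight is a difference of two elements of the chamber `w(X^∨_+)`, and the `e^λ` are units, two
such maps agree once they agree on `e^{w λ}` for dominant `λ`. There the claim is
`H_w H_{t_λ} H_w⁻¹ = H_{t_{wλ}}`, which is the braid relation applied to the two reduced
factorizations `w · t_λ = t_{wλ} · w`.
-/

/-- the action of a linear automorphism of `X^∨` on the group algebra `L[X^∨]`,
`e^τ ↦ e^{g(τ)}`. -/
noncomputable def grpAct {L : Type*} [CommRing L] {Xv : Type*} [AddCommGroup Xv]
    (g : Xv ≃+ Xv) (ξ : AddMonoidAlgebra L Xv) : AddMonoidAlgebra L Xv :=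
  AddMonoidAlgebra.mapDomain g ξ

namespace AddMonoidAlgebra

variable {R G A : Type*} [CommSemiring R] [AddGroup G] [Semiring A] [Algebra R A]

theorem isUnit_single_one (g : G) : IsUnit (single g (1 : R)) := by
  simpa using (Group.isUnit (Multiplicative.ofAdd g)).map (of R G)

theorem algHom_ext_of_forall_eq_sub {C : Set G} (hC : ∀ g, ∃ a ∈ C, ∃ c ∈ C, g = a - c)
    {φ₁ φ₂ : AddMonoidAlgebra R G →ₐ[R] A} (h : ∀ a ∈ C, φ₁ (single a 1) = φ₂ (single a 1)) :
    φ₁ = φ₂ := by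
  refine algHom_ext (fun g ↦ ?_) (Subsingleton.elim _ _)
  obtain ⟨a, ha, c, hc, rfl⟩ := hC g
  have hsplit : single a (1 : R) = single (a - c) 1 * single c 1 := by
    rw [single_mul_single, sub_add_cancel, one_mul]
  refine ((isUnit_single_one c).map φ₂).mul_right_cancel ?_
  calc φ₁ (single (a - c) 1) * φ₂ (single c 1)
      = φ₁ (single (a - c) 1) * φ₁ (single c 1) := by rw [h c hc]
    _ = φ₂ (single a 1) := by rw [← map_mul, ← hsplit, h a ha]
    _ = φ₂ (single (a - c) 1) * φ₂ (single c 1) := by rw [hsplit, map_mul]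

end AddMonoidAlgebra

theorem SemiconjBy.map_of_length_add {W M : Type*} [Monoid W] [Monoid M] {b : W → M}
    {ℓ : W → ℕ} (hbraid : ∀ u u', ℓ (u * u') = ℓ u + ℓ u' → b (u * u') = b u * b u')
    {x y y' : W} (h : SemiconjBy x y y') (hxy : ℓ (x * y) = ℓ x + ℓ y) (hy' : ℓ y' = ℓ y) :
    SemiconjBy (b x) (b y) (b y') := by
  have hy'x : ℓ (y' * x) = ℓ y' + ℓ x := by rw [← h.eq, hxy, hy', add_comm]
  rw [SemiconjBy, ← hbraid _ _ hxy, h.eq, hbraid _ _ hy'x]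

theorem Bernstein_map_conjugate_general
    {L : Type*} [CommRing L] {H : Type*} [Ring H] [Algebra L H]
    {W : Type*} [Group W] {Xv : Type*} [AddCommGroup Xv]
    -- the standard basis, length, braid relations
    (b : Module.Basis W L H) (ℓ : W → ℕ)
    (hbraid : ∀ u u' : W, ℓ (u * u') = ℓ u + ℓ u' → b (u * u') = b u * b u')
    -- the finite Weyl group `W_f ⊆ W` acting linearly on `X^∨`
    {Wfg : Type*} [Group Wfg] (ι : Wfg →* W)
    (σ : Wfg →* Multiplicative (Xv ≃+ Xv))
    -- translations, compatibly with the `W_f`-action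
    (t : Xv → W)
    (hconj : ∀ (g : Wfg) (τ : Xv), ι g * t τ * (ι g)⁻¹ = t ((Multiplicative.toAdd (σ g)) τ))
    -- the dominant cone
    (dominant : Xv → Prop)
    (hdomex : ∀ τ : Xv, ∃ lam mu, dominant lam ∧ dominant mu ∧ τ = lam - mu)
    -- key length identities
    (hlen1 : ∀ (g : Wfg) (τ : Xv), dominant τ →
      ℓ (ι g * t τ) = ℓ (ι g) + ℓ (t τ))
    (hlen2 : ∀ (g : Wfg) (τ : Xv), ℓ (t ((Multiplicative.toAdd (σ g)) τ)) = ℓ (t τ))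
    -- the Bernstein maps `Φ = Φ_e` and `Φ_w`, characterized on the respective chambers
    (w : Wfg)
    (Φ Φw : AddMonoidAlgebra L Xv →ₐ[L] H)
    (hΦ : ∀ lam : Xv, dominant lam → Φ (AddMonoidAlgebra.single lam 1) = b (t lam))
    (hΦw : ∀ lam : Xv, dominant lam →
      Φw (AddMonoidAlgebra.single ((Multiplicative.toAdd (σ w)) lam) 1) = b (t ((Multiplicative.toAdd (σ w)) lam)))
    (hu : IsUnit (b (ι w))) :
    ∀ ξ : AddMonoidAlgebra L Xv,
      Φw ξ = b (ι w) * Φ (grpAct (Multiplicative.toAdd (σ w⁻¹)) ξ) * ↑hu.unit⁻¹ := by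
  set e : Xv ≃+ Xv := Multiplicative.toAdd (σ w)
  have he_symm : Multiplicative.toAdd (σ w⁻¹) = e.symm := by rw [map_inv]; rfl
  have hbasis_conj (lam : Xv) (hlam : dominant lam) :
      b (ι w) * b (t lam) * ↑hu.unit⁻¹ = b (t (e lam)) := by
    have hsemi : SemiconjBy (ι w) (t lam) (t (e lam)) := by
      rw [SemiconjBy, ← hconj, inv_mul_cancel_right]
    rw [Units.mul_inv_eq_iff_eq_mul, hu.unit_spec]
    exact (hsemi.map_of_length_add hbraid (hlen1 w lam hlam) (hlen2 w lam)).eq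
  let Ψ : AddMonoidAlgebra L Xv →ₐ[L] H :=
    (MulSemiringAction.toAlgEquiv L H (ConjAct.toConjAct hu.unit)).toAlgHom.comp
      (Φ.comp (AddMonoidAlgebra.domCongr L L e.symm).toAlgHom)
  have hΦw_eq : Φw = Ψ := by
    refine AddMonoidAlgebra.algHom_ext_of_forall_eq_sub (C := e '' {lam | dominant lam})
      (fun τ ↦ ?_) ?_
    · obtain ⟨lam, mu, hlam, hmu, hτ⟩ := hdomex (e.symm τ)
      refine ⟨e lam, ⟨lam, hlam, rfl⟩, e mu, ⟨mu, hmu, rfl⟩, ?_⟩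
      rw [← map_sub, ← hτ, AddEquiv.apply_symm_apply]
    · rintro _ ⟨lam, hlam, rfl⟩
      simp [Ψ, ConjAct.units_smul_def, hΦw lam hlam, hΦ lam hlam, hbasis_conj lam hlam]
  intro ξ
  rw [hΦw_eq, he_symm]
  -- `domCongr` is `mapDomain`, i.e. `grpAct`, by definition
  rfl

theorem Bernstein_map_conjugate
    {L : Type*} [CommRing L] {H : Type*} [Ring H] [Algebra L H]
    {W : Type*} [Group W] {Xv : Type*} [AddCommGroup Xv]
    -- the standard basis, length, braid relations
    (b : Module.Basis W L H) (ℓ : W → ℕ)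
    (hbraid : ∀ u u' : W, ℓ (u * u') = ℓ u + ℓ u' → b (u * u') = b u * b u')
    -- the finite Weyl group `W_f ⊆ W` acting linearly on `X^∨`
    {Wfg : Type*} [Group Wfg] (ι : Wfg →* W) (hι : Function.Injective ι)
    (σ : Wfg →* Multiplicative (Xv ≃+ Xv))
    -- translations, compatibly with the `W_f`-action
    (t : Xv → W) (ht : ∀ lam mu : Xv, t (lam + mu) = t lam * t mu)
    (hconj : ∀ (g : Wfg) (τ : Xv), ι g * t τ * (ι g)⁻¹ = t ((Multiplicative.toAdd (σ g)) τ))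
    -- the dominant cone
    (dominant : Xv → Prop)
    (hdomadd : ∀ lam mu, dominant lam → dominant mu → dominant (lam + mu))
    (hdomex : ∀ τ : Xv, ∃ lam mu, dominant lam ∧ dominant mu ∧ τ = lam - mu)
    -- key length identities
    (hlen1 : ∀ (g : Wfg) (τ : Xv), dominant τ →
      ℓ (ι g * t τ) = ℓ (ι g) + ℓ (t τ))
    (hlen2 : ∀ (g : Wfg) (τ : Xv), ℓ (t ((Multiplicative.toAdd (σ g)) τ)) = ℓ (t τ))
    (hlenadd : ∀ lam mu, dominant lam → dominant mu →
      ℓ (t lam * t mu) = ℓ (t lam) + ℓ (t mu))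
    -- the Bernstein maps `Φ = Φ_e` and `Φ_w`, characterized on the respective chambers
    (w : Wfg)
    (Φ Φw : AddMonoidAlgebra L Xv →ₐ[L] H)
    (hΦ : ∀ lam : Xv, dominant lam → Φ (AddMonoidAlgebra.single lam 1) = b (t lam))
    (hΦw : ∀ lam : Xv, dominant lam →
      Φw (AddMonoidAlgebra.single ((Multiplicative.toAdd (σ w)) lam) 1) = b (t ((Multiplicative.toAdd (σ w)) lam)))
    (hu : IsUnit (b (ι w))) :
    ∀ ξ : AddMonoidAlgebra L Xv,
      Φw ξ = b (ι w) * Φ (grpAct (Multiplicative.toAdd (σ w⁻¹)) ξ) * ↑hu.unit⁻¹ :=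
  Bernstein_map_conjugate_general b ℓ hbraid ι σ t hconj dominant hdomex hlen1 hlen2 w Φ Φw hΦ hΦw
    hu
end
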